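/- arXiv:2309.10704 — 2 statements merged into one kernel-verified Lean document; each statement's English description precedes it below -/
import Mathlib

section
/- Let $\{b_k\}_{k \in I}$ be an orthonormal family in $L^2(\mathbb{R})$ partitioned into 'inner' functions (indices in $P$-set) and 'outer' functions (indices in $Q$-set), and let $P$, $Q$ denote the orthogonal projections onto their respective spans, so $PQ = QP = 0$. Assume $P M_x Q = 0$ (block diagonalization of the coordinate operator) and that $(P + Q)(x^k) = x^k$ for $k = 0, \ldots, j-1$ (polynomial completeness of the combined span up to order $j-1$). Then for each inner basis function $b_k$, $\langle b_k, x^j \rangle = \langle b_k, (P M_x)^j \mathbf{1} \rangle$, where $\mathbf{1}$ is the constant function $1$ (assumed to lie in the relevant weighted space). Equivalently, with $X_{kl} = \langle b_k, x\, b_l \rangle$ restricted to inner indices and $\xi_m = \langle b_m, 1 \rangle$, the vector $\phi_j$ with entries $\phi_{kj} = \langle b_k, x^j \rangle$ satisfies $\phi_j = X^j \xi$. -/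
open MeasureTheory

/-- Krylov-space identity for the moments of inner backbone functions:
with block-diagonal coordinate operator (`P M_x Q = 0`) and polynomial
completeness up to order `j-1`, the moment vector `φ_j` with entries
`⟨b_k, x^j⟩` (k inner) equals `X^j ξ`, where `X` is the coordinate matrix on
the inner block and `ξ_m = ⟨b_m, 1⟩`. -/
theorem krylov_moment_identity (μ : Measure ℝ) (N : ℕ) (b : Fin N → ℝ → ℝ)
    (A : Finset (Fin N)) (j : ℕ)
    (X : Matrix A A ℝ) (hXdef : ∀ k l : A, X k l = ∫ t, b k t * t * b l t ∂μ)
    (ξ : A → ℝ) (hξdef : ∀ m : A, ξ m = ∫ t, b m t ∂μ)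
    (hIntPoly : ∀ i, ∀ m ≤ j, Integrable (fun t => b i t * t ^ m) μ)
    (hIntX : ∀ i l, Integrable (fun t => b i t * t * b l t) μ)
    (hO : ∀ i l, ∫ t, b i t * b l t ∂μ = if i = l then 1 else 0)
    (hPQ : ∀ k ∈ A, ∀ l ∉ A, ∫ t, b k t * t * b l t ∂μ = 0)
    (hC : ∀ m < j, ∀ᵐ t ∂μ,
      (t : ℝ) ^ m = ∑ i : Fin N, (∫ s, b i s * s ^ m ∂μ) * b i t) :
    ∀ k : A, (∫ t, b k t * t ^ j ∂μ) = (X ^ j).mulVec ξ k := by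
  revert hIntPoly hC
  induction j with
  | zero =>
    intro hIntPoly hC k
    simp only [pow_zero, mul_one, Matrix.one_mulVec]
    exact (hξdef k).symm
  | succ j ih =>
    intro hIntPoly hC k
    have ih' := ih (fun i m hm => hIntPoly i m (hm.trans (Nat.le_succ j)))
      (fun m hm => hC m (hm.trans (Nat.lt_succ_self j)))
    set c : Fin N → ℝ := fun i => ∫ s, b i s * s ^ j ∂μ with hc_def
    have hc := hC j (Nat.lt_succ_self j)
    have hae : (fun t => b k t * t ^ (j+1)) =ᵐ[μ]
        (fun t => ∑ i : Fin N, c i * (b (k : Fin N) t * t * b i t)) := by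
      filter_upwards [hc] with t ht
      rw [pow_succ, show b (k : Fin N) t * (t ^ j * t) = b (k : Fin N) t * t * t ^ j by ring,
        ht, Finset.mul_sum]
      exact Finset.sum_congr rfl fun i _ => by ring
    have hstep : (∫ t, b (k : Fin N) t * t ^ (j+1) ∂μ)
        = ∑ i : Fin N, c i * ∫ t, b (k : Fin N) t * t * b i t ∂μ := by
      rw [integral_congr_ae hae,
        integral_finset_sum _ (fun i _ => ((hIntX k i).const_mul (c i)))]
      exact Finset.sum_congr rfl fun i _ => integral_const_mul _ _
    have hvanish : ∀ i ∈ Finset.univ, i ∉ A →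
        c i * (∫ t, b (k : Fin N) t * t * b i t ∂μ) = 0 := by
      intro i _ hi
      rw [hPQ k k.2 i hi, mul_zero]
    rw [hstep, ← Finset.sum_subset (A.subset_univ) hvanish, ← Finset.sum_attach A
      (fun i => c i * ∫ t, b (k : Fin N) t * t * b i t ∂μ)]
    have : ∀ l : A, c l * (∫ t, b (k : Fin N) t * t * b l t ∂μ)
        = X k l * (X ^ j).mulVec ξ l := by
      intro l
      rw [hXdef k l, ← ih' l]
      ring
    rw [Finset.sum_congr rfl fun l _ => this l]
    rw [pow_succ', ← Matrix.mulVec_mulVec]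
    simp [Matrix.mulVec, dotProduct, Finset.sum_attach]
end

section
/- For the erf/x density $\rho(x) = \frac{n\left(\mathrm{erf}(x/c) - \mathrm{erf}(x/d)\right)}{2x \ln(d/c)}$ with $0 < c < d$ and $n > 0$ (extended continuously at $x = 0$), the total integral satisfies $\int_{-\infty}^{\infty} \rho(x)\,dx = n$. -/
open MeasureTheory

/-- The error function `erf t = (2/√π) ∫₀ᵗ e^{-s²} ds`. -/
noncomputable def erf (t : ℝ) : ℝ :=
  (2 / Real.sqrt Real.pi) * ∫ s in (0 : ℝ)..t, Real.exp (-(s ^ 2))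

/-- The erf/x density `ρ(x) = n (erf(x/c) - erf(x/d)) / (2 x ln(d/c))`
has total integral `n`.  (The integrand's value at the single point `x = 0`
is irrelevant to the integral.) -/
theorem erfx_density_total_integral (n c d : ℝ) (hc : 0 < c) (hcd : c < d)
    (hn : 0 < n) :
    ∫ x : ℝ, n * (erf (x / c) - erf (x / d)) / (2 * x * Real.log (d / c)) = n := by
  have hd : 0 < d := hc.trans hcd
  have hL : 0 < Real.log (d / c) := Real.log_pos ((one_lt_div hc).mpr hcd)
  set L := Real.log (d / c) with hLdef
  have hsp : 0 < Real.sqrt Real.pi := Real.sqrt_pos.mpr Real.pi_pos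
  have hab : (1:ℝ)/d < 1/c := one_div_lt_one_div_of_lt hc hcd
  have hdpos : (0:ℝ) < 1/d := by positivity
  set S : Set ℝ := Set.Ioc (1/d) (1/c) with hS
  set G : ℝ → ℝ := fun x => ∫ t in S, Real.exp (-(x*t)^2) with hG
  have hcont : Continuous fun s : ℝ => Real.exp (-(s^2)) := by
    continuity
  -- Step A: pointwise identity for x ≠ 0
  have hpt : ∀ x : ℝ, x ≠ 0 →
      n * (erf (x / c) - erf (x / d)) / (2 * x * L)
        = (n / (2 * L) * (2 / Real.sqrt Real.pi)) * G x := by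
    intro x hx
    have h1 : erf (x/c) - erf (x/d)
        = (2 / Real.sqrt Real.pi) * ∫ s in (x/d)..(x/c), Real.exp (-(s^2)) := by
      rw [erf, erf, ← mul_sub]
      congr 1
      exact intervalIntegral.integral_interval_sub_left
        (hcont.intervalIntegrable _ _) (hcont.intervalIntegrable _ _)
    have h2 : (∫ t in (1/d:ℝ)..(1/c), Real.exp (-(x*t)^2))
        = x⁻¹ • ∫ s in (x/d)..(x/c), Real.exp (-(s^2)) := by
      have := intervalIntegral.integral_comp_mul_left
        (a := (1/d:ℝ)) (b := (1/c:ℝ)) (fun s => Real.exp (-(s^2))) hx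
      simpa [mul_one_div, div_eq_mul_inv] using this
    have h3 : (∫ s in (x/d)..(x/c), Real.exp (-(s^2)))
        = x * ∫ t in (1/d:ℝ)..(1/c), Real.exp (-(x*t)^2) := by
      rw [h2, smul_eq_mul]; field_simp
    have h4 : (∫ t in (1/d:ℝ)..(1/c), Real.exp (-(x*t)^2)) = G x := by
      rw [hG, hS, intervalIntegral.integral_of_le hab.le]
    rw [h1, h3, h4]
    have hL' : L ≠ 0 := ne_of_gt hL
    field_simp
  -- a.e. rewrite
  have hae : (fun x : ℝ => n * (erf (x / c) - erf (x / d)) / (2 * x * L))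
      =ᵐ[volume] fun x => (n / (2 * L) * (2 / Real.sqrt Real.pi)) * G x := by
    filter_upwards [compl_mem_ae_iff.mpr (Real.volume_singleton (a := (0:ℝ)))] with x hx
    exact hpt x (by simpa using hx)
  rw [integral_congr_ae hae, integral_const_mul]
  -- Step B: swap integrals
  have hmeas : AEStronglyMeasurable (fun p : ℝ × ℝ => Real.exp (-(p.1*p.2)^2))
      (volume.prod (volume.restrict S)) := by
    apply Continuous.aestronglyMeasurable
    continuity
  have hsec : ∀ t : ℝ, t ∈ S → Integrable (fun x => Real.exp (-(x*t)^2)) := by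
    intro t ht
    have ht0 : 0 < t := hdpos.trans ht.1
    have he : (fun x => Real.exp (-(x*t)^2)) = fun x => Real.exp (-(t^2) * x^2) := by
      funext x; ring_nf
    rw [he]
    exact integrable_exp_neg_mul_sq (by positivity)
  have hnorm : ∀ t : ℝ, t ∈ S → (∫ x : ℝ, ‖Real.exp (-(x*t)^2)‖) = Real.sqrt Real.pi / t := by
    intro t ht
    have ht0 : 0 < t := hdpos.trans ht.1
    have h1 : (fun x : ℝ => ‖Real.exp (-(x*t)^2)‖) = fun x => Real.exp (-(t^2) * x^2) := by
      funext x
      rw [Real.norm_eq_abs, abs_of_pos (Real.exp_pos _)]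
      ring_nf
    rw [h1, integral_gaussian, Real.sqrt_div Real.pi_pos.le, Real.sqrt_sq ht0.le]
  -- integrability of the bound √π / t on S
  have hbddint : IntegrableOn (fun t : ℝ => Real.sqrt Real.pi / t) S := by
    have hco : ContinuousOn (fun t : ℝ => Real.sqrt Real.pi / t) (Set.Icc (1/d) (1/c)) := by
      apply ContinuousOn.div continuousOn_const continuousOn_id
      intro t ht
      exact ne_of_gt (hdpos.trans_le ht.1)
    exact (hco.integrableOn_Icc).mono_set Set.Ioc_subset_Icc_self
  have hprodint : Integrable (fun p : ℝ × ℝ => Real.exp (-(p.1*p.2)^2))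
      (volume.prod (volume.restrict S)) := by
    rw [integrable_prod_iff' hmeas]
    constructor
    · filter_upwards [ae_restrict_mem measurableSet_Ioc] with t ht
      exact hsec t ht
    · apply hbddint.congr_fun_ae
      filter_upwards [ae_restrict_mem measurableSet_Ioc] with t ht
      exact (hnorm t ht).symm
  have hswap : (∫ x : ℝ, G x) = ∫ t in S, ∫ x : ℝ, Real.exp (-(x*t)^2) :=
    integral_integral_swap hprodint
  have hGint : (∫ x : ℝ, G x) = Real.sqrt Real.pi * L := by
    rw [hswap]
    have h5 : (∫ t in S, ∫ x : ℝ, Real.exp (-(x*t)^2))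
        = ∫ t in S, Real.sqrt Real.pi * t⁻¹ := by
      apply setIntegral_congr_fun measurableSet_Ioc
      intro t ht
      have ht0 : 0 < t := hdpos.trans ht.1
      have h := hnorm t ht
      simp only [Real.norm_eq_abs, abs_of_pos (Real.exp_pos _)] at h
      show (∫ x : ℝ, Real.exp (-(x*t)^2)) = Real.sqrt Real.pi * t⁻¹
      rw [h, div_eq_mul_inv]
    rw [h5, hS, ← intervalIntegral.integral_of_le hab.le,
      intervalIntegral.integral_const_mul, integral_inv_of_pos hdpos (by positivity)]
    have : (1/c)/(1/d) = d/c := by field_simp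
    rw [this, hLdef]
  rw [hGint]
  field_simp
end
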